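/- For every n, the Johnson graph J(n,2) is a Tinhofer graph: Tinhofer's individualization-refinement algorithm gives the correct isomorphism answer on input (J(n,2), H) for every graph H and all possible choices of individualized vertices. -/

import Mathlib

namespace ColorRef

variable {V W : Type}

/-- `crRel G c i u v` means vertices `u` and `v` get the same color in round `i`
of color refinement on `G` with initial coloring `c`. -/
def crRel (G : SimpleGraph V) {α : Type} (c : V → α) : ℕ → V → V → Prop
  | 0 => fun u v => c u = c v
  | (i + 1) => fun u v => crRel G c i u v ∧
      ∀ w : V, {a : V | G.Adj u a ∧ crRel G c i a w}.ncard =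
               {a : V | G.Adj v a ∧ crRel G c i a w}.ncard

/-- `u` and `v` get the same color in the stable coloring. -/
def stableRel (G : SimpleGraph V) {α : Type} (c : V → α) (u v : V) : Prop :=
  ∀ i : ℕ, crRel G c i u v

/-- `X` is a cell of the stable partition of `(G, c)`. -/
def IsCell (G : SimpleGraph V) {α : Type} (c : V → α) (X : Set V) : Prop :=
  ∃ u : V, X = {v : V | stableRel G c u v}

/-- The multisets of round-`i` colors on the two sides of the disjoint union `G ⊕g H`
coincide for every `i`, i.e. color refinement does not distinguish `G` and `H`. -/
def crIndist (G : SimpleGraph V) (cG : V → ℕ) (H : SimpleGraph W) (cH : W → ℕ) : Prop :=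
  ∀ (i : ℕ) (w : V ⊕ W),
    {u : V | crRel (G ⊕g H) (Sum.elim cG cH) i (Sum.inl u) w}.ncard =
    {v : W | crRel (G ⊕g H) (Sum.elim cG cH) i (Sum.inr v) w}.ncard

/-- `G` (with coloring `cG`) is amenable: any finite colored graph `H` that color
refinement fails to distinguish from `G` is color-preservingly isomorphic to `G`. -/
def Amenable (G : SimpleGraph V) (cG : V → ℕ) : Prop :=
  ∀ (W : Type) (_ : Fintype W) (H : SimpleGraph W) (cH : W → ℕ),
    crIndist G cG H cH → ∃ φ : G ≃g H, ∀ v : V, cH (φ v) = cG v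

/-! ### Induced subgraphs on cells and between cells -/

def CellEmpty (G : SimpleGraph V) (X : Set V) : Prop := ∀ u ∈ X, ∀ v ∈ X, ¬ G.Adj u v

def CellComplete (G : SimpleGraph V) (X : Set V) : Prop :=
  ∀ u ∈ X, ∀ v ∈ X, u ≠ v → G.Adj u v

/-- `G[X]` is a perfect matching `mK₂` on `X`. -/
def CellMatching (G : SimpleGraph V) (X : Set V) : Prop :=
  ∀ u ∈ X, {v : V | v ∈ X ∧ G.Adj u v}.ncard = 1

/-- `G[X]` is the complement of a perfect matching on `X`. -/
def CellCoMatching (G : SimpleGraph V) (X : Set V) : Prop :=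
  ∀ u ∈ X, {v : V | v ∈ X ∧ v ≠ u ∧ ¬ G.Adj u v}.ncard = 1

/-- `G[X]` is the 5-cycle (a 2-regular graph on 5 vertices). -/
def CellC5 (G : SimpleGraph V) (X : Set V) : Prop :=
  X.ncard = 5 ∧ ∀ u ∈ X, {v : V | v ∈ X ∧ G.Adj u v}.ncard = 2

/-- Condition A. -/
def CondA (G : SimpleGraph V) {α : Type} (c : V → α) : Prop :=
  ∀ X : Set V, IsCell G c X →
    CellEmpty G X ∨ CellComplete G X ∨ CellMatching G X ∨ CellCoMatching G X ∨ CellC5 G X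

def BipEmpty (G : SimpleGraph V) (X Y : Set V) : Prop := ∀ u ∈ X, ∀ v ∈ Y, ¬ G.Adj u v

def BipComplete (G : SimpleGraph V) (X Y : Set V) : Prop := ∀ u ∈ X, ∀ v ∈ Y, G.Adj u v

/-- `G[X,Y]` is a disjoint union of stars `sK_{1,t}` with centers `X` and leaves `Y`. -/
def BipStars (G : SimpleGraph V) (X Y : Set V) : Prop :=
  (∀ v ∈ Y, {u : V | u ∈ X ∧ G.Adj u v}.ncard = 1) ∧
  (∃ t : ℕ, ∀ u ∈ X, {v : V | v ∈ Y ∧ G.Adj u v}.ncard = t)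

/-- `G[X,Y]` is the bipartite complement of a disjoint union of stars with centers `X`. -/
def BipCoStars (G : SimpleGraph V) (X Y : Set V) : Prop :=
  (∀ v ∈ Y, {u : V | u ∈ X ∧ ¬ G.Adj u v}.ncard = 1) ∧
  (∃ t : ℕ, ∀ u ∈ X, {v : V | v ∈ Y ∧ ¬ G.Adj u v}.ncard = t)

/-- Condition B. -/
def CondB (G : SimpleGraph V) {α : Type} (c : V → α) : Prop :=
  ∀ X Y : Set V, IsCell G c X → IsCell G c Y → X ≠ Y →
    BipEmpty G X Y ∨ BipComplete G X Y ∨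
    BipStars G X Y ∨ BipStars G Y X ∨ BipCoStars G X Y ∨ BipCoStars G Y X

/-- A cell is heterogeneous if the graph it induces is neither complete nor empty. -/
def Hetero (G : SimpleGraph V) (X : Set V) : Prop :=
  ¬ CellEmpty G X ∧ ¬ CellComplete G X

/-- `{X, Y}` is an anisotropic edge of the cell graph. -/
def AnisoEdge (G : SimpleGraph V) {α : Type} (c : V → α) (X Y : Set V) : Prop :=
  IsCell G c X ∧ IsCell G c Y ∧ X ≠ Y ∧ ¬ BipEmpty G X Y ∧ ¬ BipComplete G X Y

/-- An anisotropic path in the cell graph, given as the list of its cells. -/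
def AnisoPath (G : SimpleGraph V) {α : Type} (c : V → α) (L : List (Set V)) : Prop :=
  (∀ X ∈ L, IsCell G c X) ∧ L.Nodup ∧ L.Chain' (AnisoEdge G c)

/-- Condition C: no uniform anisotropic path connects two heterogeneous cells. -/
def CondC (G : SimpleGraph V) {α : Type} (c : V → α) : Prop :=
  ¬ ∃ (X Y : Set V) (L : List (Set V)) (k : ℕ),
      AnisoPath G c (X :: (L ++ [Y])) ∧
      (∀ Z ∈ X :: (L ++ [Y]), Z.ncard = k) ∧
      Hetero G X ∧ Hetero G Y

/-- Condition D: the cell graph has no uniform anisotropic cycle. -/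
def CondD (G : SimpleGraph V) {α : Type} (c : V → α) : Prop :=
  ¬ ∃ (X : Set V) (L : List (Set V)) (k : ℕ),
      3 ≤ (X :: L).length ∧
      AnisoPath G c (X :: L) ∧
      List.Chain' (AnisoEdge G c) ((X :: L) ++ [X]) ∧
      (∀ Z ∈ X :: L, Z.ncard = k)

/-- Condition E: no anisotropic path `X Y₁ … Y_l Z` with `|X| < |Y₁| = … = |Y_l| > |Z|`
and no anisotropic cycle `X Y₁ … Y_l X` with `|X| < |Y₁| = … = |Y_l|`. -/
def CondE (G : SimpleGraph V) {α : Type} (c : V → α) : Prop :=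
  (¬ ∃ (X Z : Set V) (Ys : List (Set V)) (k : ℕ),
      Ys ≠ [] ∧
      AnisoPath G c (X :: (Ys ++ [Z])) ∧
      (∀ Y ∈ Ys, Y.ncard = k) ∧ X.ncard < k ∧ Z.ncard < k) ∧
  (¬ ∃ (X : Set V) (Ys : List (Set V)) (k : ℕ),
      2 ≤ Ys.length ∧
      AnisoPath G c (X :: Ys) ∧
      List.Chain' (AnisoEdge G c) ((X :: Ys) ++ [X]) ∧
      (∀ Y ∈ Ys, Y.ncard = k) ∧ X.ncard < k)

/-- Condition F: no anisotropic path `X Y₁ … Y_l` with `|X| < |Y₁| = … = |Y_l|`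
whose last cell `Y_l` is heterogeneous. -/
def CondF (G : SimpleGraph V) {α : Type} (c : V → α) : Prop :=
  ¬ ∃ (X : Set V) (Ys : List (Set V)) (Yl : Set V) (k : ℕ),
      Ys ≠ [] ∧
      AnisoPath G c (X :: Ys) ∧
      (∀ Y ∈ Ys, Y.ncard = k) ∧ X.ncard < k ∧
      Ys.getLast? = some Yl ∧ Hetero G Yl

/-- The type of cells of the stable partition. -/
def Cell (G : SimpleGraph V) {α : Type} (c : V → α) : Type := {X : Set V // IsCell G c X}

/-- The graph on the cells of `Π_G` formed by the anisotropic edges of the cell graph;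
its connected components are the anisotropic components of `C(G)`. -/
def anisoGraph (G : SimpleGraph V) {α : Type} (c : V → α) : SimpleGraph (Cell G c) where
  Adj A B := AnisoEdge G c A.val B.val
  symm := by
    constructor
    rintro A B ⟨h1, h2, h3, h4, h5⟩
    refine ⟨h2, h1, Ne.symm h3, fun h => h4 ?_, fun h => h5 ?_⟩
    · exact fun u hu v hv hadj => h v hv u hu hadj.symm
    · exact fun u hu v hv => (h v hv u hu).symm
  loopless := ⟨fun A h => h.2.2.1 rfl⟩

/-- Condition G: every anisotropic component is a tree, and rooting it at any cell `R`
of minimum cardinality in its component, `|X| ≤ |Y|` along edges directed away from `R`. -/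
def CondG (G : SimpleGraph V) {α : Type} (c : V → α) : Prop :=
  (anisoGraph G c).IsAcyclic ∧
  ∀ R X Y : Cell G c,
    (∀ Z : Cell G c, (anisoGraph G c).Reachable R Z → R.val.ncard ≤ Z.val.ncard) →
    (anisoGraph G c).Reachable R X →
    (anisoGraph G c).Adj X Y →
    (anisoGraph G c).dist R Y = (anisoGraph G c).dist R X + 1 →
    X.val.ncard ≤ Y.val.ncard

/-- Condition H: every anisotropic component contains at most one heterogeneous cell,
and such a cell has minimum cardinality within its component. -/
def CondH (G : SimpleGraph V) {α : Type} (c : V → α) : Prop :=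
  (∀ X Y : Cell G c, Hetero G X.val → Hetero G Y.val →
      (anisoGraph G c).Reachable X Y → X = Y) ∧
  (∀ X Z : Cell G c, Hetero G X.val →
      (anisoGraph G c).Reachable X Z → X.val.ncard ≤ Z.val.ncard)

/-! ### Matrices, fractional automorphisms and compactness -/

open Classical in
/-- The real adjacency matrix of `G`. -/
noncomputable def adjMat (G : SimpleGraph V) : Matrix V V ℝ :=
  Matrix.of fun u v => if G.Adj u v then (1 : ℝ) else 0

open Classical in
/-- The permutation matrix of a permutation `σ`. -/
noncomputable def permMat (σ : Equiv.Perm V) : Matrix V V ℝ :=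
  Matrix.of fun i j => if σ j = i then (1 : ℝ) else 0

def IsDoublyStochastic [Fintype V] (X : Matrix V V ℝ) : Prop :=
  (∀ i j, 0 ≤ X i j) ∧ (∀ i, ∑ j, X i j = 1) ∧ (∀ j, ∑ i, X i j = 1)

def IsAutomorphism (G : SimpleGraph V) (σ : Equiv.Perm V) : Prop :=
  ∀ u v : V, G.Adj (σ u) (σ v) ↔ G.Adj u v

/-- `X` is a convex combination of permutation matrices of automorphisms of `G`. -/
def IsConvexCombOfAut [Fintype V] (G : SimpleGraph V) (X : Matrix V V ℝ) : Prop :=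
  ∃ (s : Finset (Equiv.Perm V)) (w : Equiv.Perm V → ℝ),
    (∀ σ ∈ s, IsAutomorphism G σ) ∧ (∀ σ ∈ s, 0 ≤ w σ) ∧
    (∑ σ ∈ s, w σ) = 1 ∧ X = ∑ σ ∈ s, w σ • permMat σ

/-- `G` is compact: the polytope of fractional automorphisms of `G` is the convex hull
of the permutation matrices of automorphisms of `G`. -/
def CompactGraph [Fintype V] (G : SimpleGraph V) : Prop :=
  ∀ X : Matrix V V ℝ, IsDoublyStochastic X → adjMat G * X = X * adjMat G →
    IsConvexCombOfAut G X

/-! ### Equitable partitions, Godsil, Tinhofer, refinable, discrete, unigraphs -/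

/-- The partition given by the classes of the equivalence `r` is equitable. -/
def Equitable (G : SimpleGraph V) (r : V → V → Prop) : Prop :=
  ∀ u v w : V, r u v →
    {a : V | G.Adj u a ∧ r a w}.ncard = {a : V | G.Adj v a ∧ r a w}.ncard

/-- The partition given by `r` is the orbit partition of a subgroup of `Aut(G)`. -/
def IsOrbitPartition (G : SimpleGraph V) (r : V → V → Prop) : Prop :=
  ∃ S : Subgroup (Equiv.Perm V), (∀ σ ∈ S, IsAutomorphism G σ) ∧
    (∀ u v : V, r u v ↔ ∃ σ ∈ S, σ u = v)

/-- `G` is a Godsil graph. -/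
def Godsil (G : SimpleGraph V) : Prop :=
  ∀ r : V → V → Prop, Equivalence r → Equitable G r → IsOrbitPartition G r

open Classical in
/-- The coloring of the disjoint union after individualizing the pairs in `F`:
the `j`-th individualized pair gets fresh color `some j`, all other vertices keep
their (uniform) original color `none`. -/
noncomputable def tinColor (F : List (V × W)) : V ⊕ W → Option ℕ
  | Sum.inl u => F.findIdx? (fun p => decide (p.1 = u))
  | Sum.inr v => F.findIdx? (fun p => decide (p.2 = v))

/-- The stable coloring relation on `G ⊕g H` after individualizing the pairs in `F`. -/
def tinRel (G : SimpleGraph V) (H : SimpleGraph W) (F : List (V × W)) :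
    (V ⊕ W) → (V ⊕ W) → Prop :=
  stableRel (G ⊕g H) (tinColor F)

/-- The multisets of stable colors on the two sides agree after individualizing `F`. -/
def tinIndist (G : SimpleGraph V) (H : SimpleGraph W) (F : List (V × W)) : Prop :=
  ∀ w : V ⊕ W,
    {u : V | tinRel G H F (Sum.inl u) w}.ncard =
    {v : W | tinRel G H F (Sum.inr v) w}.ncard

/-- The pair `p` is a legal individualization choice at the stage reached after `F`. -/
def ValidStep (G : SimpleGraph V) (H : SimpleGraph W) (F : List (V × W)) (p : V × W) : Prop :=
  tinIndist G H F ∧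
  tinRel G H F (Sum.inl p.1) (Sum.inr p.2) ∧
  2 ≤ {u' : V | tinRel G H F (Sum.inl u') (Sum.inl p.1)}.ncard ∧
  2 ≤ {v' : W | tinRel G H F (Sum.inr v') (Sum.inr p.2)}.ncard

/-- `F` is a legal sequence of individualization choices of Tinhofer's algorithm. -/
def ValidRun (G : SimpleGraph V) (H : SimpleGraph W) (F : List (V × W)) : Prop :=
  ∀ j : Fin F.length, ValidStep G H (F.take j.val) (F.get j)

/-- After `F`, all stable color classes are singletons in `G` and in `H`. -/
def AllSingletons (G : SimpleGraph V) (H : SimpleGraph W) (F : List (V × W)) : Prop :=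
  (∀ u u' : V, tinRel G H F (Sum.inl u) (Sum.inl u') → u = u') ∧
  (∀ v v' : W, tinRel G H F (Sum.inr v) (Sum.inr v') → v = v')

/-- After `F`, Tinhofer's algorithm stops. -/
def TinTerminal (G : SimpleGraph V) (H : SimpleGraph W) (F : List (V × W)) : Prop :=
  ¬ tinIndist G H F ∨ AllSingletons G H F

/-- After `F`, Tinhofer's algorithm outputs "isomorphic": the color multisets agree,
all classes are singletons, and the color-matching map is an isomorphism. -/
def TinOutputIso (G : SimpleGraph V) (H : SimpleGraph W) (F : List (V × W)) : Prop :=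
  tinIndist G H F ∧ AllSingletons G H F ∧
  (∀ (u u' : V) (v v' : W), tinRel G H F (Sum.inl u) (Sum.inr v) →
     tinRel G H F (Sum.inl u') (Sum.inr v') → (G.Adj u u' ↔ H.Adj v v'))

/-- `G` is a Tinhofer graph: for every finite `H` and every legal complete run of
Tinhofer's individualization-refinement algorithm, the output is correct. -/
def Tinhofer (G : SimpleGraph V) : Prop :=
  ∀ (W : Type) (_ : Fintype W) (H : SimpleGraph W) (F : List (V × W)),
    ValidRun G H F → TinTerminal G H F →
    (TinOutputIso G H F ↔ Nonempty (G ≃g H))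

/-- `G` is refinable: its stable partition is the orbit partition of `Aut(G)`. -/
def Refinable (G : SimpleGraph V) : Prop :=
  ∀ u v : V, stableRel G (fun _ => (0 : ℕ)) u v ↔
    ∃ σ : Equiv.Perm V, IsAutomorphism G σ ∧ σ u = v

/-- `G` is discrete: the stable partition consists of singletons. -/
def Discrete (G : SimpleGraph V) : Prop :=
  ∀ u v : V, stableRel G (fun _ => (0 : ℕ)) u v → u = v

/-- `G` is a unigraph: it is determined up to isomorphism by its degree sequence. -/
def Unigraph (G : SimpleGraph V) : Prop :=
  ∀ (W : Type) (_ : Fintype W) (H : SimpleGraph W),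
    (∃ e : V ≃ W, ∀ v : V, {w : W | H.Adj (e v) w}.ncard = {u : V | G.Adj v u}.ncard) →
    Nonempty (G ≃g H)

/-! ### Concrete graphs -/

/-- The cycle graph on `n` vertices. -/
def cycleG (n : ℕ) : SimpleGraph (Fin n) :=
  SimpleGraph.fromRel (fun u v => (u.val + 1) % n = v.val)

/-- The Petersen graph as the Kneser graph `K(5,2)`. -/
def petersen : SimpleGraph {s : Finset (Fin 5) // s.card = 2} where
  Adj a b := Disjoint a.val b.val
  symm := ⟨fun _ _ h => h.symm⟩
  loopless := by
    constructor
    intro a h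
    have h' : Disjoint a.val a.val := h
    rw [disjoint_self] at h'
    have h2 := a.2
    rw [h'] at h2
    simp at h2

/-- The Johnson graph `J(n,2)`. -/
def johnson (n : ℕ) : SimpleGraph {s : Finset (Fin n) // s.card = 2} where
  Adj a b := (a.val ∩ b.val).card = 1
  symm := by
    constructor
    intro a b h
    have h' : (a.val ∩ b.val).card = 1 := h
    show (b.val ∩ a.val).card = 1
    rwa [Finset.inter_comm]
  loopless := by
    constructor
    intro a h
    have h' : (a.val ∩ a.val).card = 1 := h
    rw [Finset.inter_self, a.2] at h'
    omega

/-- The cell (as an element of the cell type) containing vertex `u`. -/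
def vcell (G : SimpleGraph V) {α : Type} (c : V → α) (u : V) : Cell G c :=
  ⟨{v : V | stableRel G c u v}, ⟨u, rfl⟩⟩

/-- `u` and `v` lie in cells of the same anisotropic component. -/
def SameAnisoComp (G : SimpleGraph V) {α : Type} (c : V → α) (u v : V) : Prop :=
  (anisoGraph G c).Reachable (vcell G c u) (vcell G c v)

/-!
Tinhofer's algorithm never wrongly answers "isomorphic": the color-matching bijection it checks is
then an isomorphism. If `G ≅ H`, keep an isomorphism `G ≃g H` sending every individualized vertex
of `G` to its partner. It preserves the refined colors, so the two sides stay indistinguishable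
and the run can only stop with singleton classes, answering "isomorphic". The isomorphism survives
an individualization `(u, v)` as soon as `u` and the preimage of `v`, which have equal stable
colors, are exchanged by an automorphism of `G` fixing the vertices individualized so far.

For `J(n,2)` two refinement rounds already provide such automorphisms. Vertices `u = {x, y}` and
`v = {x', y'}` with equal colors after one round meet each individualized pair in equally many
points. Either their points can be matched so that matched points lie in the same individualized
pairs, and a permutation of `Fin n` does the job, or there are individualized pairs `{z, A}`,
`{z, B}` with `{u, v} = {{z, w}, {A, B}}`. Then counting common neighbours in the second round
forces `n = 4`; `u` and `v` are complementary and their transposition is an automorphism.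
-/
section ColorRefinement

variable {X α : Type} {U : SimpleGraph X} {c : X → α}

lemma crRel_refl : ∀ (i : ℕ) (u : X), crRel U c i u u
  | 0, _ => rfl
  | i + 1, u => ⟨crRel_refl i u, fun _ => rfl⟩

lemma crRel_symm : ∀ {i : ℕ} {u v : X}, crRel U c i u v → crRel U c i v u
  | 0, _, _, h => h.symm
  | _ + 1, _, _, h => ⟨crRel_symm h.1, fun w => (h.2 w).symm⟩

lemma crRel_trans : ∀ {i : ℕ} {u v w : X}, crRel U c i u v → crRel U c i v w → crRel U c i u w
  | 0, _, _, _, h, h' => h.trans h'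
  | _ + 1, _, _, _, h, h' => ⟨crRel_trans h.1 h'.1, fun w => (h.2 w).trans (h'.2 w)⟩

lemma crRel_antitone : Antitone (crRel U c) :=
  antitone_nat_of_succ_le fun _ _ _ h => h.1

lemma stableRel_symm {u v : X} (h : stableRel U c u v) : stableRel U c v u :=
  fun i => crRel_symm (h i)

lemma stableRel_trans {u v w : X} (h : stableRel U c u v) (h' : stableRel U c v w) :
    stableRel U c u w :=
  fun i => crRel_trans (h i) (h' i)

lemma exists_stableRel_iff_crRel [Finite X] : ∃ N, ∀ u v, stableRel U c u v ↔ crRel U c N u v := by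
  obtain ⟨N, hN⟩ := WellFoundedLT.antitone_chain_condition (crRel_antitone (U := U) (c := c))
  refine ⟨N, fun u v => ⟨fun h => h N, fun h i => ?_⟩⟩
  rcases le_total i N with hi | hi
  · exact crRel_antitone hi u v h
  · rwa [← hN i hi]

lemma equitable_stableRel [Finite X] : Equitable U (stableRel U c) := by
  obtain ⟨N, hN⟩ := exists_stableRel_iff_crRel (U := U) (c := c)
  intro u v w h
  simpa only [hN] using (h (N + 1)).2 w

lemma crRel_succ_ncard_eq [Finite X] {i : ℕ} {u v : X} (h : crRel U c (i + 1) u v) (D : Set X)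
    (hD : ∀ a ∈ D, ∀ b, crRel U c i a b → b ∈ D) :
    (U.neighborSet u ∩ D).ncard = (U.neighborSet v ∩ D).ncard := by
  induction hk : D.ncard using Nat.strong_induction_on generalizing D with
  | _ k ih =>
    rcases D.eq_empty_or_nonempty with rfl | ⟨w, hw⟩
    · simp
    set C := {a | crRel U c i a w}
    have hCD : C ⊆ D := fun a ha => hD w hw a (crRel_symm ha)
    have hwC : w ∈ C := crRel_refl i w
    have hlt : (D \ C).ncard < k :=
      hk ▸ Set.ncard_lt_ncard (Set.sdiff_ssubset_left_iff.mpr ⟨w, hw, hwC⟩) D.toFinite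
    have hrest := ih _ hlt (D \ C) (fun a ha b hab =>
      ⟨hD a ha.1 b hab, fun hb => ha.2 (crRel_trans hab hb)⟩) rfl
    have hsplit : ∀ x, (U.neighborSet x ∩ D).ncard =
        (U.neighborSet x ∩ C).ncard + (U.neighborSet x ∩ (D \ C)).ncard := fun x => by
      rw [← Set.ncard_inter_add_ncard_sdiff_eq_ncard (U.neighborSet x ∩ D) C (Set.toFinite _),
        Set.inter_assoc, Set.inter_eq_right.mpr hCD, Set.inter_sdiff_assoc]
    rw [hsplit u, hsplit v, hrest]
    exact congrArg (· + _) (h.2 w)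

lemma crRel_apply_iso (e : U ≃g U) (hc : ∀ a, c (e a) = c a) :
    ∀ (i : ℕ) (a : X), crRel U c i a (e a)
  | 0, a => (hc a).symm
  | i + 1, a => by
    refine ⟨crRel_apply_iso e hc i a, fun w => ?_⟩
    rw [← Set.ncard_image_of_injective _ e.injective]
    congr 1
    ext b
    constructor
    · rintro ⟨b, ⟨hab, hbw⟩, rfl⟩
      exact ⟨e.map_adj_iff.mpr hab, crRel_trans (crRel_symm (crRel_apply_iso e hc i b)) hbw⟩
    · rintro ⟨hab, hbw⟩
      refine ⟨e.symm b, ⟨?_, ?_⟩, e.apply_symm_apply b⟩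
      · simpa using e.symm.map_adj_iff.mpr hab
      · have hb := crRel_apply_iso e hc i (e.symm b)
        rw [e.apply_symm_apply] at hb
        exact crRel_trans hb hbw

end ColorRefinement

lemma _root_.Set.ncard_setOf_and_eq {V : Type} (p : V → Prop) (v : V) [Decidable (p v)] :
    {a | p a ∧ a = v}.ncard = if p v then 1 else 0 := by
  split_ifs with h
  · rw [show {a | p a ∧ a = v} = {v} from Set.ext fun a => ⟨And.right, fun ha => ⟨ha ▸ h, ha⟩⟩]
    exact Set.ncard_singleton v
  · rw [show {a | p a ∧ a = v} = ∅ from Set.eq_empty_of_forall_notMem fun a ha => h (ha.2 ▸ ha.1)]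
    exact Set.ncard_empty V

def IsIndividualized {V α : Type} (c : V → α) (v : V) : Prop := ∀ a, c a = c v → a = v

section Individualized

variable {V α : Type} {G : SimpleGraph V} {c : V → α}

lemma crRel_one_adj_iff {S u v : V} (hS : IsIndividualized c S) (h : crRel G c 1 u v) :
    G.Adj u S ↔ G.Adj v S := by
  classical
  have hset : ∀ x, {a | G.Adj x a ∧ crRel G c 0 a S} = {a | G.Adj x a ∧ a = S} := fun x =>
    Set.ext fun a => and_congr_right fun _ => ⟨hS a, fun h => h ▸ rfl⟩
  have hcount := h.2 S
  rw [hset, hset, Set.ncard_setOf_and_eq, Set.ncard_setOf_and_eq] at hcount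
  split_ifs at hcount <;> simp_all

lemma crRel_two_ncard_commonNeighbors_eq [Finite V] {S T u v : V} (hS : IsIndividualized c S)
    (hT : IsIndividualized c T) (h : crRel G c 2 u v) :
    {r | G.Adj u r ∧ G.Adj S r ∧ G.Adj T r}.ncard =
      {r | G.Adj v r ∧ G.Adj S r ∧ G.Adj T r}.ncard := by
  refine crRel_succ_ncard_eq h {r | G.Adj S r ∧ G.Adj T r} fun a ha b hab => ?_
  simp only [Set.mem_ofPred_eq, G.adj_comm S, G.adj_comm T] at ha ⊢
  exact ⟨(crRel_one_adj_iff hS hab).mp ha.1, (crRel_one_adj_iff hT hab).mp ha.2⟩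

end Individualized

section DisjointUnion

variable {V W α : Type} {G : SimpleGraph V} {H : SimpleGraph W}

lemma ncard_sum_adj_inl (u : V) (P : V ⊕ W → Prop) :
    {a | (G ⊕g H).Adj (Sum.inl u) a ∧ P a}.ncard = {r | G.Adj u r ∧ P (Sum.inl r)}.ncard := by
  have himage : {a | (G ⊕g H).Adj (Sum.inl u) a ∧ P a} =
      Sum.inl '' {r | G.Adj u r ∧ P (Sum.inl r)} := by
    ext (r | r) <;> simp
  rw [himage, Set.ncard_image_of_injective _ Sum.inl_injective]

lemma ncard_sum_adj_inr (v : W) (P : V ⊕ W → Prop) :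
    {a | (G ⊕g H).Adj (Sum.inr v) a ∧ P a}.ncard = {r | H.Adj v r ∧ P (Sum.inr r)}.ncard := by
  have himage : {a | (G ⊕g H).Adj (Sum.inr v) a ∧ P a} =
      Sum.inr '' {r | H.Adj v r ∧ P (Sum.inr r)} := by
    ext (r | r) <;> simp
  rw [himage, Set.ncard_image_of_injective _ Sum.inr_injective]

lemma crRel_sum_inl_iff {c : V ⊕ W → α} :
    ∀ (i : ℕ) (a b : V), crRel (G ⊕g H) c i (Sum.inl a) (Sum.inl b) ↔ crRel G (c ∘ Sum.inl) i a b
  | 0, _, _ => Iff.rfl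
  | i + 1, a, b => by
    have ih := crRel_sum_inl_iff (c := c) i
    have hcount : ∀ x r₀,
        {y | (G ⊕g H).Adj (Sum.inl x) y ∧ crRel (G ⊕g H) c i y (Sum.inl r₀)}.ncard =
          {r | G.Adj x r ∧ crRel G (c ∘ Sum.inl) i r r₀}.ncard := fun x r₀ => by
      simp only [ncard_sum_adj_inl, ih]
    refine ⟨fun h => ⟨(ih a b).mp h.1, fun r₀ => ?_⟩, fun h => ⟨(ih a b).mpr h.1, fun w => ?_⟩⟩
    · rw [← hcount, ← hcount]
      exact h.2 (Sum.inl r₀)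
    by_cases hw : ∃ r₀, crRel (G ⊕g H) c i (Sum.inl r₀) w
    · obtain ⟨r₀, hr₀⟩ := hw
      have hclass : ∀ y, crRel (G ⊕g H) c i y w ↔ crRel (G ⊕g H) c i y (Sum.inl r₀) :=
        fun y => ⟨fun hy => crRel_trans hy (crRel_symm hr₀), fun hy => crRel_trans hy hr₀⟩
      simp only [hclass, hcount]
      exact h.2 r₀
    · push Not at hw
      rw [ncard_sum_adj_inl, ncard_sum_adj_inl]
      simp [hw]

end DisjointUnion

lemma _root_.List.findIdx?_congr {β : Type} {p q : β → Bool} {l : List β}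
    (h : ∀ x ∈ l, p x = q x) : l.findIdx? p = l.findIdx? q := by
  induction l with
  | nil => rfl
  | cons a l ih =>
    simp [List.findIdx?_cons, h a (by simp), ih fun x hx => h x (by simp [hx])]

def IndividualizationRefinable {V : Type} (G : SimpleGraph V) : Prop :=
  ∀ {α : Type} (c : V → α) (u v : V), stableRel G c u v →
    ∃ e : G ≃g G, (∀ S, IsIndividualized c S → e S = S) ∧ e u = v

section Tinhofer

variable {V W : Type} {G : SimpleGraph V} {H : SimpleGraph W} {F : List (V × W)}

lemma isIndividualized_tinColor {q : V × W} (hq : q ∈ F) :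
    IsIndividualized (tinColor F ∘ Sum.inl) q.1 := by
  classical
  intro a ha
  have hq' := List.findIdx?_eq_some_of_exists (p := fun p : V × W => decide (p.1 = q.1))
    ⟨q, hq, by simp⟩
  simp only [Function.comp, tinColor] at ha
  obtain ⟨_, hqa, -⟩ := List.findIdx?_eq_some_iff_getElem.mp (ha.trans hq')
  obtain ⟨_, hqq, -⟩ := List.findIdx?_eq_some_iff_getElem.mp hq'
  simp only [decide_eq_true_eq] at hqa hqq
  exact hqa.symm.trans hqq

/-- The automorphism `inl u ↦ inr (ψ u)`, `inr v ↦ inl (ψ⁻¹ v)` of `G ⊕g H`. -/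
def sumSwap (ψ : G ≃g H) : G ⊕g H ≃g G ⊕g H :=
  (SimpleGraph.Iso.sumCongr ψ ψ.symm).trans SimpleGraph.Iso.sumComm

lemma tinColor_sumSwap (ψ : G ≃g H) (hψ : ∀ p ∈ F, ψ p.1 = p.2) (a : V ⊕ W) :
    tinColor F (sumSwap ψ a) = tinColor F a := by
  classical
  rcases a with u | v
  · refine List.findIdx?_congr fun p hp => ?_
    simp [← hψ p hp]
  · refine List.findIdx?_congr fun p hp => ?_
    simp [← hψ p hp, RelIso.eq_symm_apply]

lemma tinRel_inr_inl_symm (ψ : G ≃g H) (hψ : ∀ p ∈ F, ψ p.1 = p.2) (v : W) :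
    tinRel G H F (Sum.inr v) (Sum.inl (ψ.symm v)) :=
  fun i => crRel_apply_iso (sumSwap ψ) (tinColor_sumSwap ψ hψ) i (Sum.inr v)

lemma tinIndist_of_iso (ψ : G ≃g H) (hψ : ∀ p ∈ F, ψ p.1 = p.2) : tinIndist G H F := by
  intro w
  have himage : {v | tinRel G H F (Sum.inr v) w} = ψ '' {u | tinRel G H F (Sum.inl u) w} := by
    ext v
    refine ⟨fun hv => ⟨ψ.symm v, ?_, ψ.apply_symm_apply v⟩, ?_⟩
    · exact stableRel_trans (stableRel_symm (tinRel_inr_inl_symm ψ hψ v)) hv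
    · rintro ⟨u, hu, rfl⟩
      have hψu := tinRel_inr_inl_symm ψ hψ (ψ u)
      rw [ψ.symm_apply_apply] at hψu
      exact stableRel_trans hψu hu
  rw [himage, Set.ncard_image_of_injective _ ψ.injective]

lemma nonempty_iso_of_tinOutputIso (h : TinOutputIso G H F) : Nonempty (G ≃g H) := by
  obtain ⟨hind, ⟨hV, hW⟩, hadj⟩ := h
  have hclassV : ∀ u, {u' | tinRel G H F (Sum.inl u') (Sum.inl u)} = {u} := fun u =>
    Set.ext fun u' => ⟨hV u' u, fun h => h ▸ fun i => crRel_refl i _⟩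
  have hclassW : ∀ v, {v' | tinRel G H F (Sum.inr v') (Sum.inr v)} = {v} := fun v =>
    Set.ext fun v' => ⟨hW v' v, fun h => h ▸ fun i => crRel_refl i _⟩
  have hto : ∀ u, ∃ v, tinRel G H F (Sum.inl u) (Sum.inr v) := fun u => by
    have h := hind (Sum.inl u)
    rw [hclassV, Set.ncard_singleton] at h
    obtain ⟨v, hv⟩ := Set.nonempty_of_ncard_ne_zero (h ▸ one_ne_zero)
    exact ⟨v, stableRel_symm hv⟩
  have hfrom : ∀ v, ∃ u, tinRel G H F (Sum.inl u) (Sum.inr v) := fun v => by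
    have h := hind (Sum.inr v)
    rw [hclassW, Set.ncard_singleton] at h
    exact Set.nonempty_of_ncard_ne_zero (h ▸ one_ne_zero)
  choose f hf using hto
  choose g hg using hfrom
  let e : V ≃ W :=
    { toFun := f
      invFun := g
      left_inv := fun u => hV _ _ (stableRel_trans (hg (f u)) (stableRel_symm (hf u)))
      right_inv := fun v => hW _ _ (stableRel_trans (stableRel_symm (hf (g v))) (hg v)) }
  exact ⟨⟨e, fun {a b} => (hadj a b (f a) (f b) (hf a) (hf b)).symm⟩⟩

lemma tinOutputIso_of_tinIndist [Finite V] [Finite W] (hind : tinIndist G H F)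
    (hsing : AllSingletons G H F) : TinOutputIso G H F := by
  classical
  refine ⟨hind, hsing, fun u u' v v' huv huv' => ?_⟩
  have hcount := equitable_stableRel _ _ (Sum.inl u') huv
  rw [ncard_sum_adj_inl, ncard_sum_adj_inr] at hcount
  have hG : {r | G.Adj u r ∧ tinRel G H F (Sum.inl r) (Sum.inl u')} =
      {r | G.Adj u r ∧ r = u'} :=
    Set.ext fun r => and_congr_right fun _ =>
      ⟨hsing.1 r u', fun h => h ▸ fun i => crRel_refl i _⟩
  have hH : {r | H.Adj v r ∧ tinRel G H F (Sum.inr r) (Sum.inl u')} =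
      {r | H.Adj v r ∧ r = v'} :=
    Set.ext fun r => and_congr_right fun _ =>
      ⟨fun h => hsing.2 r v' (stableRel_trans h huv'), fun h => h ▸ stableRel_symm huv'⟩
  simp only [tinRel] at hG hH
  rw [hG, hH, Set.ncard_setOf_and_eq, Set.ncard_setOf_and_eq] at hcount
  split_ifs at hcount <;> simp_all

lemma exists_iso_extend (hG : IndividualizationRefinable G) (ψ : G ≃g H)
    (hψ : ∀ q ∈ F, ψ q.1 = q.2) {p : V × W} (hp : tinRel G H F (Sum.inl p.1) (Sum.inr p.2)) :
    ∃ ψ' : G ≃g H, ∀ q ∈ F ++ [p], ψ' q.1 = q.2 := by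
  have hrel : stableRel G (tinColor F ∘ Sum.inl) p.1 (ψ.symm p.2) := fun i =>
    (crRel_sum_inl_iff i _ _).mp (stableRel_trans hp (tinRel_inr_inl_symm ψ hψ p.2) i)
  obtain ⟨e, hfix, hep⟩ := hG _ _ _ hrel
  refine ⟨e.trans ψ, fun q hq => ?_⟩
  rcases List.mem_append.mp hq with hq | hq
  · simp [hfix q.1 (isIndividualized_tinColor hq), hψ q hq]
  · simp_all

lemma exists_iso_of_validRun (hG : IndividualizationRefinable G) (hrun : ValidRun G H F)
    (φ : G ≃g H) : ∃ ψ : G ≃g H, ∀ p ∈ F, ψ p.1 = p.2 := by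
  suffices ∀ j ≤ F.length, ∃ ψ : G ≃g H, ∀ p ∈ F.take j, ψ p.1 = p.2 by
    simpa using this F.length le_rfl
  intro j hj
  induction j with
  | zero => exact ⟨φ, by simp⟩
  | succ j ih =>
    obtain ⟨ψ, hψ⟩ := ih (by omega)
    rw [List.take_add_one, List.getElem?_eq_getElem hj, Option.toList_some]
    exact exists_iso_extend hG ψ hψ (hrun ⟨j, hj⟩).2.1

theorem tinhofer_of_individualizationRefinable [Finite V] (hG : IndividualizationRefinable G) :
    Tinhofer G := by
  intro W _ H F hrun hterm
  refine ⟨nonempty_iso_of_tinOutputIso, fun ⟨φ⟩ => ?_⟩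
  obtain ⟨ψ, hψ⟩ := exists_iso_of_validRun hG hrun φ
  have hind := tinIndist_of_iso ψ hψ
  exact hterm.elim (absurd hind) (tinOutputIso_of_tinIndist hind)

end Tinhofer

lemma _root_.SimpleGraph.adj_swap_iff_of_twins {V : Type} [DecidableEq V] {G : SimpleGraph V}
    {u v : V} (h : ∀ w, w ≠ u → w ≠ v → (G.Adj u w ↔ G.Adj v w)) (a b : V) :
    G.Adj (Equiv.swap u v a) (Equiv.swap u v b) ↔ G.Adj a b := by
  simp only [Equiv.swap_apply_def]
  split_ifs <;> grind [SimpleGraph.adj_comm, SimpleGraph.irrefl]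

lemma _root_.Equiv.swap_apply_mem_iff {α : Type} [DecidableEq α] {p : α → Prop} {a b : α}
    (h : p a ↔ p b) (i : α) : p (Equiv.swap a b i) ↔ p i := by
  rw [Equiv.swap_apply_def]
  split_ifs <;> simp_all

lemma exists_perm_map_pair {α : Type} [DecidableEq α] {x y x' y' : α} (hxy : x ≠ y)
    (hxy' : x' ≠ y') : ∃ σ : Equiv.Perm α, σ x = x' ∧ σ y = y' ∧
      ∀ p : α → Prop, (p x ↔ p x') → (p y ↔ p y') → ∀ i, p (σ i) ↔ p i := by
  set τ := Equiv.swap x x'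
  have hτy : τ y ≠ x' := fun h =>
    hxy (τ.injective (h.trans (Equiv.swap_apply_left x x').symm)).symm
  refine ⟨τ.trans (Equiv.swap (τ y) y'), ?_, Equiv.swap_apply_left _ _, fun p hx hy i => ?_⟩
  · simp [τ, Equiv.swap_apply_of_ne_of_ne hτy.symm hxy']
  · simp only [Equiv.trans_apply]
    rw [Equiv.swap_apply_mem_iff ((Equiv.swap_apply_mem_iff hx y).trans hy),
      Equiv.swap_apply_mem_iff hx]

lemma _root_.Finset.card_pair_inter {α : Type} [DecidableEq α] {x y : α} (hxy : x ≠ y)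
    (s : Finset α) :
    (({x, y} : Finset α) ∩ s).card = (if x ∈ s then 1 else 0) + (if y ∈ s then 1 else 0) := by
  rw [← Finset.filter_mem_eq_inter, Finset.card_filter, Finset.sum_pair hxy]

lemma _root_.Finset.eq_pair_of_mem {α : Type} [DecidableEq α] {s : Finset α} {x y : α}
    (hs : s.card = 2) (hx : x ∈ s) (hy : y ∈ s) (hxy : x ≠ y) : s = {x, y} :=
  (Finset.eq_of_subset_of_card_le (by simp [Finset.insert_subset_iff, hx, hy])
    (by rw [hs, Finset.card_pair_eq_two_iff.mpr hxy])).symm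

lemma _root_.Finset.cross_of_card_pair_inter_eq {α : Type} [DecidableEq α] {x y x' y' : α}
    {s : Finset α} (hxy : x ≠ y) (hxy' : x' ≠ y')
    (h : (({x, y} : Finset α) ∩ s).card = (({x', y'} : Finset α) ∩ s).card)
    (hle : (({x, y} : Finset α) ∩ s).card ≤ 1) (hne : ¬((x ∈ s ↔ x' ∈ s) ∧ (y ∈ s ↔ y' ∈ s))) :
    x ∈ s ∧ y' ∈ s ∧ y ∉ s ∧ x' ∉ s ∨ y ∈ s ∧ x' ∈ s ∧ x ∉ s ∧ y' ∉ s := by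
  rw [Finset.card_pair_inter hxy, Finset.card_pair_inter hxy'] at h
  rw [Finset.card_pair_inter hxy] at hle
  split_ifs at h hle <;> first | omega | tauto

section Johnson

variable {n : ℕ}

abbrev JohnsonVertex (n : ℕ) : Type := {s : Finset (Fin n) // s.card = 2}

lemma johnson_adj_iff {a b : JohnsonVertex n} : (johnson n).Adj a b ↔ (a.1 ∩ b.1).card = 1 :=
  Iff.rfl

lemma card_inter_le_one_of_ne {a b : JohnsonVertex n} (h : a ≠ b) : (a.1 ∩ b.1).card ≤ 1 := by
  by_contra hlt
  have hle : (a.1 ∩ b.1).card ≤ 2 := (Finset.card_le_card Finset.inter_subset_left).trans_eq a.2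
  have ha := Finset.eq_of_subset_of_card_le (Finset.inter_subset_left : a.1 ∩ b.1 ⊆ a.1)
    (by rw [a.2]; omega)
  have hb := Finset.eq_of_subset_of_card_le (Finset.inter_subset_right : a.1 ∩ b.1 ⊆ b.1)
    (by rw [b.2]; omega)
  exact h (Subtype.ext (ha.symm.trans hb))

def johnsonIsoOfPerm (σ : Equiv.Perm (Fin n)) : johnson n ≃g johnson n where
  toEquiv := σ.finsetCongr.subtypeEquiv fun s => by simp
  map_rel_iff' {a b} := by
    simp [johnson_adj_iff, Equiv.finsetCongr_apply, ← Finset.map_inter]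

lemma johnsonIsoOfPerm_apply_eq {σ : Equiv.Perm (Fin n)} {s : JohnsonVertex n}
    (h : ∀ i, σ i ∈ s.1 ↔ i ∈ s.1) : johnsonIsoOfPerm σ s = s := by
  refine Subtype.ext (Finset.ext fun i => ?_)
  simp [johnsonIsoOfPerm, Equiv.finsetCongr_apply, Finset.mem_map_equiv, ← h (σ.symm i)]

lemma johnson_exists_iso_of_twins {P : JohnsonVertex n → Prop} {u v : JohnsonVertex n}
    {x y x' y' : Fin n} (hxy : x ≠ y) (hxy' : x' ≠ y') (hu : u.1 = {x, y}) (hv : v.1 = {x', y'})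
    (htwins : ∀ S, P S → (x ∈ S.1 ↔ x' ∈ S.1) ∧ (y ∈ S.1 ↔ y' ∈ S.1)) :
    ∃ e : johnson n ≃g johnson n, (∀ S, P S → e S = S) ∧ e u = v := by
  obtain ⟨σ, hσx, hσy, hσ⟩ := exists_perm_map_pair hxy hxy'
  refine ⟨johnsonIsoOfPerm σ, fun S hS => johnsonIsoOfPerm_apply_eq
    (hσ (· ∈ S.1) (htwins S hS).1 (htwins S hS).2), Subtype.ext ?_⟩
  simp [johnsonIsoOfPerm, Equiv.finsetCongr_apply, hu, hv, hσx, hσy]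

lemma johnson_adj_of_isCompl {u v r : JohnsonVertex n} (huv : IsCompl u.1 v.1) (hru : r ≠ u)
    (hrv : r ≠ v) : (johnson n).Adj u r ∧ (johnson n).Adj v r := by
  have hsum := Finset.card_inter_add_card_sdiff r.1 u.1
  rw [Finset.sdiff_eq_inter_compl, huv.compl_eq, r.2] at hsum
  have hu := card_inter_le_one_of_ne hru
  have hv := card_inter_le_one_of_ne hrv
  rw [johnson_adj_iff, johnson_adj_iff, Finset.inter_comm u.1, Finset.inter_comm v.1]
  omega

def johnsonSwapIso {u v : JohnsonVertex n} (huv : IsCompl u.1 v.1) : johnson n ≃g johnson n where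
  toEquiv := Equiv.swap u v
  map_rel_iff' {a b} := SimpleGraph.adj_swap_iff_of_twins (fun _ hu hv =>
    iff_of_true (johnson_adj_of_isCompl huv hu hv).1 (johnson_adj_of_isCompl huv hu hv).2) a b

/-- The hypotheses say `S = {z, A}`, `T = {z, B}`, `a = {z, w}` and `b = {A, B}` with `z, A, B, w`
distinct. A point `e` outside these four would make `{z, e}` a common neighbour of `a`, `S`, `T`,
while `b`, `S`, `T` have none. -/
lemma isCompl_of_ncard_commonNeighbors_eq {S T a b : JohnsonVertex n} {z A B w : Fin n}
    (hzS : z ∈ S.1) (hAS : A ∈ S.1) (hBS : B ∉ S.1) (hwS : w ∉ S.1)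
    (hzT : z ∈ T.1) (hBT : B ∈ T.1) (hAT : A ∉ T.1) (hwT : w ∉ T.1)
    (hza : z ∈ a.1) (hwa : w ∈ a.1) (hAb : A ∈ b.1) (hBb : B ∈ b.1)
    (hcount : {r | (johnson n).Adj a r ∧ (johnson n).Adj S r ∧ (johnson n).Adj T r}.ncard =
      {r | (johnson n).Adj b r ∧ (johnson n).Adj S r ∧ (johnson n).Adj T r}.ncard) :
    IsCompl a.1 b.1 := by
  have hzA : z ≠ A := fun h => hAT (h ▸ hzT)
  have hzB : z ≠ B := fun h => hBS (h ▸ hzS)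
  have hzw : z ≠ w := fun h => hwS (h ▸ hzS)
  have hAB : A ≠ B := fun h => hBS (h ▸ hAS)
  have hwA : w ≠ A := fun h => hwS (h ▸ hAS)
  have hwB : w ≠ B := fun h => hwT (h ▸ hBT)
  have hS := Finset.eq_pair_of_mem S.2 hzS hAS hzA
  have hT := Finset.eq_pair_of_mem T.2 hzT hBT hzB
  have ha := Finset.eq_pair_of_mem a.2 hza hwa hzw
  have hb := Finset.eq_pair_of_mem b.2 hAb hBb hAB
  -- `b`, `S`, `T` cover each of `z, A, B` twice, so a vertex meeting each of them once
  -- would contain `3 / 2` of these points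
  have hnone : {r | (johnson n).Adj b r ∧ (johnson n).Adj S r ∧ (johnson n).Adj T r} = ∅ := by
    refine Set.eq_empty_of_forall_notMem fun r ⟨hbr, hSr, hTr⟩ => ?_
    rw [johnson_adj_iff, hb, Finset.card_pair_inter hAB] at hbr
    rw [johnson_adj_iff, hS, Finset.card_pair_inter hzA] at hSr
    rw [johnson_adj_iff, hT, Finset.card_pair_inter hzB] at hTr
    split_ifs at hbr hSr hTr <;> omega
  have hcover : ∀ e, e = z ∨ e = w ∨ e = A ∨ e = B := by
    by_contra! ⟨e, hez, hew, heA, heB⟩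
    let r : JohnsonVertex n := ⟨{z, e}, Finset.card_pair_eq_two_iff.mpr (Ne.symm hez)⟩
    have hr : r ∈ {r | (johnson n).Adj a r ∧ (johnson n).Adj S r ∧ (johnson n).Adj T r} := by
      simp only [Set.mem_ofPred_eq, johnson_adj_iff, ha, hS, hT, Finset.card_pair_inter hzw,
        Finset.card_pair_inter hzA, Finset.card_pair_inter hzB, r]
      simp [hez.symm, hew.symm, heA.symm, heB.symm, hzw.symm, hzA.symm, hzB.symm]
    have hpos := (Set.ncard_pos (Set.toFinite _)).mpr ⟨r, hr⟩
    rw [hcount, hnone, Set.ncard_empty] at hpos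
    exact lt_irrefl 0 hpos
  rw [ha, hb]
  constructor
  · simp [Finset.disjoint_left, hzA, hzB, hwA, hwB]
  · rw [Finset.codisjoint_left]
    intro e he
    rcases hcover e with rfl | rfl | rfl | rfl <;> simp_all

lemma isCompl_of_cross_of_parallel {S₁ S₂ u v : JohnsonVertex n} {x y x' y' : Fin n}
    (hu : u.1 = {x, y}) (hv : v.1 = {x', y'})
    (h₁ : x ∈ S₁.1 ∧ y' ∈ S₁.1 ∧ y ∉ S₁.1 ∧ x' ∉ S₁.1 ∨ y ∈ S₁.1 ∧ x' ∈ S₁.1 ∧ x ∉ S₁.1 ∧ y' ∉ S₁.1)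
    (h₂ : x ∈ S₂.1 ∧ x' ∈ S₂.1 ∧ y ∉ S₂.1 ∧ y' ∉ S₂.1 ∨ y ∈ S₂.1 ∧ y' ∈ S₂.1 ∧ x ∉ S₂.1 ∧ x' ∉ S₂.1)
    (hcount : {r | (johnson n).Adj u r ∧ (johnson n).Adj S₁ r ∧ (johnson n).Adj S₂ r}.ncard =
      {r | (johnson n).Adj v r ∧ (johnson n).Adj S₁ r ∧ (johnson n).Adj S₂ r}.ncard) :
    IsCompl u.1 v.1 := by
  obtain ⟨hxu, hyu⟩ : x ∈ u.1 ∧ y ∈ u.1 := by simp [hu]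
  obtain ⟨hxv, hyv⟩ : x' ∈ v.1 ∧ y' ∈ v.1 := by simp [hv]
  rcases h₁ with ⟨h₁x, h₁y', h₁y, h₁x'⟩ | ⟨h₁y, h₁x', h₁x, h₁y'⟩ <;>
    rcases h₂ with ⟨h₂x, h₂x', h₂y, h₂y'⟩ | ⟨h₂y, h₂y', h₂x, h₂x'⟩
  · exact isCompl_of_ncard_commonNeighbors_eq h₁x h₁y' h₁x' h₁y h₂x h₂x' h₂y' h₂y
      hxu hyu hyv hxv hcount
  · exact (isCompl_of_ncard_commonNeighbors_eq h₁y' h₁x h₁y h₁x' h₂y' h₂y h₂x h₂x'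
      hyv hxv hxu hyu hcount.symm).symm
  · exact (isCompl_of_ncard_commonNeighbors_eq h₁x' h₁y h₁x h₁y' h₂x' h₂x h₂y h₂y'
      hxv hyv hyu hxu hcount.symm).symm
  · exact isCompl_of_ncard_commonNeighbors_eq h₁y h₁x' h₁y' h₁x h₂y h₂y' h₂x' h₂x
      hyu hxu hxv hyv hcount

lemma card_inter_eq_of_crRel_one {α : Type} {c : JohnsonVertex n → α} {S u v : JohnsonVertex n}
    (hS : IsIndividualized c S) (hu : u ≠ S) (hv : v ≠ S) (h : crRel (johnson n) c 1 u v) :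
    (u.1 ∩ S.1).card = (v.1 ∩ S.1).card := by
  have hadj := crRel_one_adj_iff hS h
  have hule := card_inter_le_one_of_ne hu
  have hvle := card_inter_le_one_of_ne hv
  rw [johnson_adj_iff, johnson_adj_iff] at hadj
  omega

theorem johnson_exists_iso_of_crRel_two {α : Type} {c : JohnsonVertex n → α}
    {u v : JohnsonVertex n} (h : crRel (johnson n) c 2 u v) :
    ∃ e : johnson n ≃g johnson n, (∀ S, IsIndividualized c S → e S = S) ∧ e u = v := by
  by_cases huv : u = v
  · exact ⟨SimpleGraph.Iso.refl, fun _ _ => rfl, huv⟩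
  have hcol : c u = c v := h.1.1
  have hne : ∀ S, IsIndividualized c S → u ≠ S ∧ v ≠ S := fun S hS =>
    ⟨by rintro rfl; exact huv (hS v hcol.symm).symm, by rintro rfl; exact huv (hS u hcol)⟩
  have hmeet : ∀ S, IsIndividualized c S →
      (u.1 ∩ S.1).card = (v.1 ∩ S.1).card ∧ (u.1 ∩ S.1).card ≤ 1 := fun S hS =>
    ⟨card_inter_eq_of_crRel_one hS (hne S hS).1 (hne S hS).2 h.1,
      card_inter_le_one_of_ne (hne S hS).1⟩
  obtain ⟨x, y, hxy, hu⟩ := Finset.card_eq_two.mp u.2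
  obtain ⟨x', y', hxy', hv⟩ := Finset.card_eq_two.mp v.2
  by_cases hpar : ∀ S, IsIndividualized c S → (x ∈ S.1 ↔ x' ∈ S.1) ∧ (y ∈ S.1 ↔ y' ∈ S.1)
  · exact johnson_exists_iso_of_twins hxy hxy' hu hv hpar
  by_cases hcross : ∀ S, IsIndividualized c S → (x ∈ S.1 ↔ y' ∈ S.1) ∧ (y ∈ S.1 ↔ x' ∈ S.1)
  · exact johnson_exists_iso_of_twins hxy hxy'.symm hu (hv.trans (Finset.pair_comm _ _)) hcross
  simp only [Classical.not_forall] at hpar hcross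
  obtain ⟨S₁, hS₁, h₁⟩ := hpar
  obtain ⟨S₂, hS₂, h₂⟩ := hcross
  rw [hu, hv] at hmeet
  have hcompl := isCompl_of_cross_of_parallel hu hv
    (Finset.cross_of_card_pair_inter_eq hxy hxy' (hmeet S₁ hS₁).1 (hmeet S₁ hS₁).2 h₁)
    (Finset.cross_of_card_pair_inter_eq hxy hxy'.symm
      ((hmeet S₂ hS₂).1.trans (by rw [Finset.pair_comm])) (hmeet S₂ hS₂).2 h₂)
    (crRel_two_ncard_commonNeighbors_eq hS₁ hS₂ h)
  exact ⟨johnsonSwapIso hcompl,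
    fun S hS => Equiv.swap_apply_of_ne_of_ne (hne S hS).1.symm (hne S hS).2.symm,
    Equiv.swap_apply_left u v⟩

theorem johnson_individualizationRefinable : IndividualizationRefinable (johnson n) :=
  fun _ _ _ h => johnson_exists_iso_of_crRel_two (h 2)

end Johnson

theorem johnson_tinhofer (n : ℕ) : Tinhofer (johnson n) :=
  tinhofer_of_individualizationRefinable johnson_individualizationRefinable

end ColorRef
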